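/- arXiv:2510.01705 — 4 statements merged into one kernel-verified Lean document; each statement's English description precedes it below -/
import Mathlib

section
/- Let P be a continuous linear projection on B with ran A(z₀) ⊆ ran P, and set Q = I − P. Then the function z ↦ P A(z) + (z − z₀)⁻¹ Q A(z), defined on U \ {z₀}, extends to an analytic function on all of U whose value at z₀ is P A(z₀) + Q A'(z₀), where A' is the derivative of A. -/
open scoped Topology

/-! Since `Q A(z₀) = 0`, the quotient `(z - z₀)⁻¹ Q A(z)` is the difference quotient
`dslope (Q A) z₀`, which is analytic wherever `Q A` is, and takes the value `Q A'(z₀)` at `z₀`. -/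

section dslope

variable {𝕜 : Type*} [NontriviallyNormedField 𝕜] {E : Type*} [NormedAddCommGroup E]
  [NormedSpace 𝕜 E] {f : 𝕜 → E} {a b : 𝕜}

theorem AnalyticAt.dslope_self (hf : AnalyticAt 𝕜 f a) : AnalyticAt 𝕜 (dslope f a) a :=
  let ⟨_, hp⟩ := hf
  ⟨_, hp.has_fpower_series_dslope_fslope⟩

theorem AnalyticAt.dslope (hf : AnalyticAt 𝕜 f b) : AnalyticAt 𝕜 (dslope f a) b := by
  rcases eq_or_ne b a with rfl | hba
  · exact hf.dslope_self
  have hslope : AnalyticAt 𝕜 (fun z => (z - a)⁻¹ • (f z - f a)) b :=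
    ((analyticAt_id.sub analyticAt_const).inv (sub_ne_zero.mpr hba)).smul
      (hf.sub analyticAt_const)
  refine hslope.congr ?_
  filter_upwards [dslope_eventuallyEq_slope_of_ne f hba] with z hz
  rw [hz, slope_def_module]

theorem AnalyticOnNhd.dslope {s : Set 𝕜} (hf : AnalyticOnNhd 𝕜 f s) :
    AnalyticOnNhd 𝕜 (dslope f a) s :=
  fun z hz => (hf z hz).dslope

end dslope

theorem ContinuousLinearMap.one_sub_mul_eq_zero_of_range_le {R M : Type*} [Ring R]
    [TopologicalSpace M] [AddCommGroup M] [IsTopologicalAddGroup M] [Module R M]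
    {P T : M →L[R] M} (hP : IsIdempotentElem P)
    (hT : LinearMap.range (T : M →ₗ[R] M) ≤ LinearMap.range (P : M →ₗ[R] M)) :
    (1 - P) * T = 0 := by
  ext x
  obtain ⟨y, hy⟩ := hT ⟨x, rfl⟩
  change P y = T x at hy
  have hPy : P (P y) = P y := congr($hP y)
  simp [← hy, hPy]

theorem stmt1_general {B : Type*} [NormedAddCommGroup B] [NormedSpace ℂ B]
    (U : Set ℂ) (z₀ : ℂ) (hz₀ : z₀ ∈ U)
    (A : ℂ → (B →L[ℂ] B)) (hA : AnalyticOnNhd ℂ A U)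
    (P : B →L[ℂ] B) (hP : P * P = P)
    (hrange : LinearMap.range (A z₀ : B →ₗ[ℂ] B) ≤ LinearMap.range (P : B →ₗ[ℂ] B)) :
    ∃ F : ℂ → (B →L[ℂ] B),
      AnalyticOnNhd ℂ F U ∧
      (∀ z ∈ U, z ≠ z₀ →
        F z = P * A z + (z - z₀)⁻¹ • (((1 : B →L[ℂ] B) - P) * A z)) ∧
      F z₀ = P * A z₀ + ((1 : B →L[ℂ] B) - P) * deriv A z₀ := by
  set G : ℂ → (B →L[ℂ] B) := fun z => (1 - P) * A z
  have hG : AnalyticOnNhd ℂ G U := fun z hz => analyticAt_const.mul (hA z hz)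
  have hG₀ : G z₀ = 0 := ContinuousLinearMap.one_sub_mul_eq_zero_of_range_le hP hrange
  refine ⟨fun z => P * A z + dslope G z₀ z,
    fun z hz => (analyticAt_const.mul (hA z hz)).add (hG.dslope z hz), ?_, ?_⟩
  · intro z _ hne
    dsimp only
    rw [dslope_of_ne _ hne, slope_def_module, hG₀, sub_zero]
  · dsimp only
    rw [dslope_same, deriv_const_mul _ (hA z₀ hz₀).differentiableAt]

/-- Let `B` be a complex Banach space, `U ⊆ ℂ` open, `z₀ ∈ U`, and `A : U → L(B)`
analytic. Let `P` be a continuous linear projection on `B` with `ran A(z₀) ⊆ ran P`, and set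
`Q = I − P`. Then the function `z ↦ P A(z) + (z − z₀)⁻¹ Q A(z)`, defined on `U \ {z₀}`, extends
to an analytic function on all of `U` whose value at `z₀` is `P A(z₀) + Q A'(z₀)`, where `A'`
is the derivative of `A`. -/
theorem stmt1 {B : Type*} [NormedAddCommGroup B] [NormedSpace ℂ B] [CompleteSpace B]
    (U : Set ℂ) (hU : IsOpen U) (z₀ : ℂ) (hz₀ : z₀ ∈ U)
    (A : ℂ → (B →L[ℂ] B)) (hA : AnalyticOnNhd ℂ A U)
    (P : B →L[ℂ] B) (hP : P * P = P)
    (hrange : LinearMap.range (A z₀ : B →ₗ[ℂ] B) ≤ LinearMap.range (P : B →ₗ[ℂ] B)) :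
    ∃ F : ℂ → (B →L[ℂ] B),
      AnalyticOnNhd ℂ F U ∧
      (∀ z ∈ U, z ≠ z₀ →
        F z = P * A z + (z - z₀)⁻¹ • (((1 : B →L[ℂ] B) - P) * A z)) ∧
      F z₀ = P * A z₀ + ((1 : B →L[ℂ] B) - P) * deriv A z₀ :=
  stmt1_general U z₀ hz₀ A hA P hP hrange
end

section
/- Let P₁ be a continuous linear projection on B with ran P₁ = ran A(z₀). Then sup_{0 < |z − z₀| < δ} |z − z₀|^{d−1} ‖A(z)⁻¹ P₁‖ < ∞ for some δ > 0; equivalently, the function z ↦ A(z)⁻¹ P₁ is meromorphic at z₀ with a pole of order at most d − 1. -/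
open scoped Topology

/-! Write `A(z)⁻¹ = (z - z₀)⁻ᵈ g(z)` with `g` analytic at `z₀`. Then `g(z) A(z) = (z - z₀)ᵈ`
off `z₀`, so by continuity `g(z₀) A(z₀) = 0`, and `g(z₀) P₁ = 0` because `ran P₁ ⊆ ran A(z₀)`.
Hence `g(z) P₁ = O(z - z₀)`, and `A(z)⁻¹ P₁ = (z - z₀)⁻ᵈ g(z) P₁` is `O((z - z₀)^(1 - d))`. -/

/-- `f` has a pole of order exactly `d` at `z₀`: near `z₀` (off `z₀`),
`f z = (z - z₀)⁻ᵈ • g z` for some function `g` analytic at `z₀` with `g z₀ ≠ 0`.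
For `d = 0` this means `f` extends analytically across `z₀` with nonzero value. -/
def HasPoleOrderAt {E : Type*} [NormedAddCommGroup E] [NormedSpace ℂ E]
    (f : ℂ → E) (z₀ : ℂ) (d : ℕ) : Prop :=
  ∃ g : ℂ → E, AnalyticAt ℂ g z₀ ∧ g z₀ ≠ 0 ∧
    ∀ᶠ z in 𝓝[≠] z₀, f z = ((z - z₀)⁻¹) ^ d • g z

section

variable {R : Type*} [NormedRing R] [NormedAlgebra ℂ R]

theorem mul_eq_pow_smul_one_of_inverse_eq {a g : R} {w : ℂ} (hw : w ≠ 0) (d : ℕ)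
    (ha : IsUnit a) (hinv : Ring.inverse a = (w⁻¹) ^ d • g) : g * a = w ^ d • (1 : R) := by
  calc g * a = w ^ d • (((w⁻¹) ^ d • g) * a) := by
        rw [smul_mul_assoc, smul_smul, ← mul_pow, mul_inv_cancel₀ hw, one_pow, one_smul]
    _ = w ^ d • 1 := by rw [← hinv, Ring.inverse_mul_cancel _ ha]

theorem mul_eq_zero_of_eventually_mul_eq_pow_smul_one {A g : ℂ → R} {z₀ : ℂ} {d : ℕ}
    (hd : d ≠ 0) (hA : ContinuousAt A z₀) (hg : ContinuousAt g z₀)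
    (h : ∀ᶠ z in 𝓝[≠] z₀, g z * A z = (z - z₀) ^ d • (1 : R)) : g z₀ * A z₀ = 0 := by
  have hcont : ContinuousAt (fun z => (z - z₀) ^ d • (1 : R)) z₀ := by fun_prop
  simpa [zero_pow hd] using
    ((hg.mul hA).eventuallyEq_nhds_iff_eventuallyEq_nhdsNE hcont).1 h |>.eq_of_nhds

end

theorem ContinuousLinearMap.mul_eq_zero_of_range_le {𝕜 E : Type*} [NontriviallyNormedField 𝕜]
    [NormedAddCommGroup E] [NormedSpace 𝕜 E] {T S P : E →L[𝕜] E} (hTS : T * S = 0)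
    (hPS : LinearMap.range (P : E →ₗ[𝕜] E) ≤ LinearMap.range (S : E →ₗ[𝕜] E)) : T * P = 0 := by
  ext x
  obtain ⟨y, hy⟩ := hPS (LinearMap.mem_range_self (P : E →ₗ[𝕜] E) x)
  have hy' : S y = P x := hy
  simpa [hy'] using congrArg (fun U : E →L[𝕜] E => U y) hTS

theorem norm_pow_pred_mul_norm_inv_pow_smul {E : Type*} [NormedAddCommGroup E] [NormedSpace ℂ E]
    {w : ℂ} (hw : w ≠ 0) {d : ℕ} (hd : d ≠ 0) (x : E) :
    ‖w‖ ^ (d - 1) * ‖(w⁻¹) ^ d • x‖ = ‖w‖⁻¹ * ‖x‖ := by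
  obtain ⟨n, rfl⟩ := Nat.exists_eq_add_one_of_ne_zero hd
  have hw' : ‖w‖ ≠ 0 := norm_ne_zero_iff.mpr hw
  rw [norm_smul, norm_pow, norm_inv, Nat.add_sub_cancel, inv_pow, pow_succ, mul_inv, ← mul_assoc,
    ← mul_assoc, mul_inv_cancel₀ (pow_ne_zero n hw'), one_mul]

theorem DifferentiableAt.exists_bound_pow_pred_mul_inv_pow_smul {E : Type*}
    [NormedAddCommGroup E] [NormedSpace ℂ E] {F : ℂ → E} {z₀ : ℂ} (hF : DifferentiableAt ℂ F z₀)
    (hF₀ : F z₀ = 0) {d : ℕ} (hd : d ≠ 0) :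
    ∃ C, ∀ᶠ z in 𝓝[≠] z₀, ‖z - z₀‖ ^ (d - 1) * ‖((z - z₀)⁻¹) ^ d • F z‖ ≤ C := by
  obtain ⟨C, hC⟩ := hF.isBigO_sub.bound
  refine ⟨C, ?_⟩
  filter_upwards [hC.filter_mono nhdsWithin_le_nhds, self_mem_nhdsWithin] with z hz hne
  have hw : z - z₀ ≠ 0 := sub_ne_zero.mpr hne
  rw [hF₀, sub_zero] at hz
  calc ‖z - z₀‖ ^ (d - 1) * ‖((z - z₀)⁻¹) ^ d • F z‖ = ‖z - z₀‖⁻¹ * ‖F z‖ :=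
        norm_pow_pred_mul_norm_inv_pow_smul hw hd _
    _ ≤ ‖z - z₀‖⁻¹ * (C * ‖z - z₀‖) := by gcongr
    _ = C := by field_simp [norm_ne_zero_iff.mpr hw]

theorem stmt3_general
    {B : Type*} [NormedAddCommGroup B] [NormedSpace ℂ B]
    (U : Set ℂ) (z₀ : ℂ) (hz₀U : z₀ ∈ U)
    (A : ℂ → (B →L[ℂ] B)) (hA : AnalyticOnNhd ℂ A U)
    (hInv : ∀ᶠ z in 𝓝[≠] z₀, IsUnit (A z))
    (d : ℕ) (hd : 1 ≤ d)
    (hpole : HasPoleOrderAt (fun z => Ring.inverse (A z)) z₀ d)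
    (P₁ : B →L[ℂ] B)
    (hP₁range : LinearMap.range (P₁ : B →ₗ[ℂ] B) = LinearMap.range (A z₀ : B →ₗ[ℂ] B)) :
    ∃ δ > (0 : ℝ), ∃ C : ℝ,
      ∀ z : ℂ, z ≠ z₀ → ‖z - z₀‖ < δ →
        ‖z - z₀‖ ^ (d - 1) * ‖Ring.inverse (A z) * P₁‖ ≤ C := by
  obtain ⟨g, hg, -, hinv⟩ := hpole
  have hd₀ : d ≠ 0 := Nat.one_le_iff_ne_zero.mp hd
  have hgA : ∀ᶠ z in 𝓝[≠] z₀, g z * A z = (z - z₀) ^ d • (1 : B →L[ℂ] B) := by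
    filter_upwards [hinv, hInv, self_mem_nhdsWithin] with z hz hunit hne
    exact mul_eq_pow_smul_one_of_inverse_eq (sub_ne_zero.mpr hne) d hunit hz
  have hgP : g z₀ * P₁ = 0 :=
    ContinuousLinearMap.mul_eq_zero_of_range_le
      (mul_eq_zero_of_eventually_mul_eq_pow_smul_one hd₀ (hA z₀ hz₀U).continuousAt
        hg.continuousAt hgA) hP₁range.le
  obtain ⟨C, hC⟩ := (hg.differentiableAt.mul_const P₁).exists_bound_pow_pred_mul_inv_pow_smul
    hgP hd₀
  have hbound : ∀ᶠ z in 𝓝[≠] z₀, ‖z - z₀‖ ^ (d - 1) * ‖Ring.inverse (A z) * P₁‖ ≤ C := by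
    filter_upwards [hC, hinv] with z hz hz'
    rwa [hz', smul_mul_assoc]
  obtain ⟨δ, hδ, hball⟩ := Metric.eventually_nhds_iff.1 (eventually_nhdsWithin_iff.1 hbound)
  exact ⟨δ, hδ, C, fun z hne hlt => hball (by rwa [dist_eq_norm]) hne⟩

/-- In the setting of an analytic Fredholm-valued function `A` on an open connected
set `U`, invertible on a punctured neighborhood of `z₀` but not at `z₀`, with `A(z)⁻¹` having a
pole of order `d ≥ 1` at `z₀`: if `P₁` is a continuous linear projection with
`ran P₁ = ran A(z₀)`, then `sup_{0 < |z − z₀| < δ} |z − z₀|^{d−1} ‖A(z)⁻¹ P₁‖ < ∞` for some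
`δ > 0`. -/
theorem stmt3
    {B : Type*} [NormedAddCommGroup B] [NormedSpace ℂ B] [CompleteSpace B]
    (U : Set ℂ) (hU : IsOpen U) (hUconn : IsConnected U) (z₀ : ℂ) (hz₀U : z₀ ∈ U)
    (A : ℂ → (B →L[ℂ] B)) (hA : AnalyticOnNhd ℂ A U)
    (Acoef : ℕ → (B →L[ℂ] B))
    (hAcoef : ∀ᶠ z in 𝓝 z₀, HasSum (fun j : ℕ => (z - z₀) ^ j • Acoef j) (A z))
    (hFred : ∀ z ∈ U, FiniteDimensional ℂ (LinearMap.ker (A z : B →ₗ[ℂ] B)) ∧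
      IsClosed ((LinearMap.range (A z : B →ₗ[ℂ] B) : Submodule ℂ B) : Set B) ∧
      FiniteDimensional ℂ (B ⧸ LinearMap.range (A z : B →ₗ[ℂ] B)))
    (hInv : ∀ᶠ z in 𝓝[≠] z₀, IsUnit (A z))
    (hNotInv : ¬ IsUnit (A z₀))
    (d : ℕ) (hd : 1 ≤ d)
    (hpole : HasPoleOrderAt (fun z => Ring.inverse (A z)) z₀ d)
    (P₁ : B →L[ℂ] B) (hP₁proj : P₁ * P₁ = P₁)
    (hP₁range : LinearMap.range (P₁ : B →ₗ[ℂ] B) = LinearMap.range (A z₀ : B →ₗ[ℂ] B)) :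
    ∃ δ > (0 : ℝ), ∃ C : ℝ,
      ∀ z : ℂ, z ≠ z₀ → ‖z - z₀‖ < δ →
        ‖z - z₀‖ ^ (d - 1) * ‖Ring.inverse (A z) * P₁‖ ≤ C :=
  stmt3_general U z₀ hz₀U A hA hInv d hd hpole P₁ hP₁range
end

section
/- Let N₀ be a finite-dimensional subspace of H and let N₁, …, N_d be closed subspaces of H, each of finite codimension. Then ⋂_{j=0}^{d} N_j = {0} if and only if H = N₀^⊥ + N₁^⊥ + ⋯ + N_d^⊥ (the algebraic sum of the orthogonal complements equals all of H). -/
/-!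
The orthogonal complement of `S = ∑ j, (N j)ᗮ` is `⨅ j, N j`, since all the `N j` are closed.
So `⨅ j, N j = ⊥` says exactly that `S` is dense, and the converse direction is immediate.
For the forward direction it remains to see that `S` is closed: it contains `(N 0)ᗮ`, which is
closed and of finite codimension because `N 0` is finite-dimensional.
-/

namespace Submodule

theorem finsetSum_eq_iSup {R M ι : Type*} [Semiring R] [AddCommMonoid M] [Module R M]
    (s : Finset ι) (K : ι → Submodule R M) : ∑ i ∈ s, K i = ⨆ i ∈ s, K i := by
  classical
  induction s using Finset.induction with
  | empty => simp
  | insert i s hi ih => rw [Finset.sum_insert hi, ih, add_eq_sup, Finset.iSup_insert]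

variable {𝕜 E : Type*} [RCLike 𝕜] [NormedAddCommGroup E] [InnerProductSpace 𝕜 E]

instance finiteDimensional_quotient_orthogonal (K : Submodule 𝕜 E) [FiniteDimensional 𝕜 K] :
    FiniteDimensional 𝕜 (E ⧸ Kᗮ) :=
  (quotientEquivOfIsCompl Kᗮ K K.isCompl_orthogonal.symm).symm.finiteDimensional

theorem isClosed_of_orthogonal_le {K S : Submodule 𝕜 E} [FiniteDimensional 𝕜 K] (h : Kᗮ ≤ S) :
    IsClosed (S : Set E) :=
  isClosed_mono_of_finiteDimensional_quotient K.isClosed_orthogonal h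

variable [CompleteSpace E]

theorem eq_top_of_isClosed_of_orthogonal_eq_bot {S : Submodule 𝕜 E} (hS : IsClosed (S : Set E))
    (h : Sᗮ = ⊥) : S = ⊤ := by
  have : CompleteSpace S := hS.completeSpace_coe
  exact orthogonal_eq_bot_iff.mp h

theorem orthogonal_finsetSum_orthogonal {ι : Type*} {s : Finset ι} {K : ι → Submodule 𝕜 E}
    (hK : ∀ i ∈ s, IsClosed (K i : Set E)) : (∑ i ∈ s, (K i)ᗮ)ᗮ = ⨅ i ∈ s, K i := by
  rw [finsetSum_eq_iSup, iSup_subtype', iInf_subtype', ← iInf_orthogonal]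
  congr! with i
  rw [orthogonal_orthogonal_eq_closure, (hK i i.2).submodule_topologicalClosure_eq]

end Submodule

open Submodule

theorem stmt12_general {H : Type*} [NormedAddCommGroup H] [InnerProductSpace ℂ H] [CompleteSpace H]
    (d : ℕ) (N : ℕ → Submodule ℂ H)
    (hN0 : FiniteDimensional ℂ (N 0))
    (hclosed : ∀ j, 1 ≤ j → j ≤ d → IsClosed ((N j : Submodule ℂ H) : Set H)) :
    (⨅ j ∈ Finset.range (d + 1), N j) = ⊥ ↔
      (∑ j ∈ Finset.range (d + 1), (N j)ᗮ) = ⊤ := by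
  have hN_closed : ∀ j ∈ Finset.range (d + 1), IsClosed (N j : Set H) := by
    intro j hj
    rcases Nat.eq_zero_or_pos j with rfl | hj_pos
    · exact (N 0).closed_of_finiteDimensional
    · exact hclosed j hj_pos (Nat.lt_succ_iff.mp (Finset.mem_range.mp hj))
  have hN0_le : (N 0)ᗮ ≤ ∑ j ∈ Finset.range (d + 1), (N j)ᗮ :=
    Finset.single_le_sum (f := fun j ↦ (N j)ᗮ) (fun _ _ ↦ bot_le)
      (Finset.mem_range.mpr d.succ_pos)
  rw [← orthogonal_finsetSum_orthogonal hN_closed]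
  exact ⟨eq_top_of_isClosed_of_orthogonal_eq_bot (isClosed_of_orthogonal_le hN0_le),
    fun h ↦ by rw [h, top_orthogonal_eq_bot]⟩

/-- Let `H` be a complex Hilbert space, `N₀` a finite-dimensional subspace of `H`
and `N₁, …, N_d` closed subspaces of `H` of finite codimension. Then `⋂_{j=0}^{d} N_j = {0}`
if and only if `H = N₀^⊥ + N₁^⊥ + ⋯ + N_d^⊥` (the algebraic sum of the orthogonal
complements equals all of `H`). -/
theorem stmt12 {H : Type*} [NormedAddCommGroup H] [InnerProductSpace ℂ H] [CompleteSpace H]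
    (d : ℕ) (N : ℕ → Submodule ℂ H)
    (hN0 : FiniteDimensional ℂ (N 0))
    (hclosed : ∀ j, 1 ≤ j → j ≤ d → IsClosed ((N j : Submodule ℂ H) : Set H))
    (hcodim : ∀ j, 1 ≤ j → j ≤ d → FiniteDimensional ℂ (H ⧸ N j)) :
    (⨅ j ∈ Finset.range (d + 1), N j) = ⊥ ↔
      (∑ j ∈ Finset.range (d + 1), (N j)ᗮ) = ⊤ :=
  stmt12_general d N hN0 hclosed
end

section
/- For every w ∈ ℂ, the ordered product satisfies (P₁ + wQ₁)(P₂ + wQ₂) ⋯ (P_m + wQ_m) = ∑_{j=0}^{m} (P_{j+1} − P_j) w^j; moreover, if w ≠ 0, this operator is invertible in L(B) with inverse ∑_{j=0}^{m} (P_{j+1} − P_j) w^{−j}. -/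
/-!
The range and kernel inclusions make the projections a chain, `P j * P k = P (min j k)`.
Hence the layers `E j = P (j + 1) - P j` are orthogonal idempotents summing to `1`, so
`S w = ∑ w ^ j • E j` satisfies `S w * S w' = S (w * w')` and `S 1 = 1`; thus `S w⁻¹` inverts
`S w`. The product formula holds by induction: the first `n` factors multiply to
`S_n w + w ^ n • (1 - P n)`, which for `n = m` is `S w` because `P (m + 1) = 1`.
-/

open Finset

theorem mul_eq_min_of_adjacent {M : Type*} [Semigroup M] {P : ℕ → M} {n : ℕ}
    (hidem : ∀ k ≤ n, IsIdempotentElem (P k))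
    (hleft : ∀ k < n, P (k + 1) * P k = P k) (hright : ∀ k < n, P k * P (k + 1) = P k) :
    ∀ j ≤ n, ∀ k ≤ n, P j * P k = P (min j k) := by
  have absorb : ∀ j k, j ≤ k → k ≤ n → P k * P j = P j ∧ P j * P k = P j := by
    intro j k hjk
    induction k, hjk using Nat.le_induction with
    | base => exact fun hj ↦ ⟨hidem j hj, hidem j hj⟩
    | succ k _ ih =>
      intro hk
      obtain ⟨ihl, ihr⟩ := ih (by omega)
      constructor
      · rw [← ihl, ← mul_assoc, hleft k hk]
      · rw [← ihr, mul_assoc, hright k hk]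
  intro j hj k hk
  rcases le_total j k with hjk | hkj
  · rw [min_eq_left hjk, (absorb j k hjk hk).2]
  · rw [min_eq_right hkj, (absorb k j hkj hj).1]

namespace ContinuousLinearMap

variable {R M : Type*} [Ring R] [TopologicalSpace M] [AddCommGroup M] [Module R M]
  {p q : M →L[R] M}

theorem mul_eq_right_of_range_le (hq : IsIdempotentElem q)
    (h : LinearMap.range (p : M →ₗ[R] M) ≤ LinearMap.range (q : M →ₗ[R] M)) : q * p = p := by
  exact_mod_cast (LinearMap.IsIdempotentElem.comp_eq_right_iff
    (IsIdempotentElem.toLinearMap hq) (p : M →ₗ[R] M)).mpr h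

theorem mul_eq_left_of_ker_le (hq : IsIdempotentElem q)
    (h : LinearMap.ker (q : M →ₗ[R] M) ≤ LinearMap.ker (p : M →ₗ[R] M)) : p * q = p := by
  exact_mod_cast (LinearMap.IsIdempotentElem.comp_eq_left_iff
    (IsIdempotentElem.toLinearMap hq) (p : M →ₗ[R] M)).mpr h

end ContinuousLinearMap

section Layers

variable {R A : Type*} [CommSemiring R] [Ring A] [Algebra R A]

def scaleLayers (P : ℕ → A) (n : ℕ) (w : R) : A :=
  ∑ j ∈ range n, w ^ j • (P (j + 1) - P j)

variable {P : ℕ → A} {n : ℕ}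

theorem scaleLayers_succ (w : R) :
    scaleLayers P (n + 1) w = scaleLayers P n w + w ^ n • (P (n + 1) - P n) :=
  sum_range_succ _ _

theorem scaleLayers_one : scaleLayers P n (1 : R) = P n - P 0 := by
  simp only [scaleLayers, one_pow, one_smul]
  exact sum_range_sub P n

variable (hP : ∀ j ≤ n, ∀ k ≤ n, P j * P k = P (min j k))
include hP

theorem layer_mul_layer {j k : ℕ} (hj : j < n) (hk : k < n) :
    (P (j + 1) - P j) * (P (k + 1) - P k) = if j = k then P (j + 1) - P j else 0 := by
  simp only [sub_mul, mul_sub, hP _ (by omega : j + 1 ≤ n) _ (by omega : k + 1 ≤ n),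
    hP _ (by omega : j + 1 ≤ n) _ hk.le, hP _ hj.le _ (by omega : k + 1 ≤ n), hP _ hj.le _ hk.le]
  rcases lt_trichotomy j k with h | rfl | h
  · rw [if_neg h.ne, min_eq_left (by omega : j + 1 ≤ k + 1), min_eq_left (by omega : j + 1 ≤ k),
      min_eq_left (by omega : j ≤ k + 1), min_eq_left h.le]
    abel
  · simp
  · rw [if_neg h.ne', min_eq_right (by omega : k + 1 ≤ j + 1), min_eq_right (by omega : k ≤ j + 1),
      min_eq_right (by omega : k + 1 ≤ j), min_eq_right h.le]
    abel

theorem scaleLayers_mul_scaleLayers (w w' : R) :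
    scaleLayers P n w * scaleLayers P n w' = scaleLayers P n (w * w') := by
  rw [scaleLayers, scaleLayers, sum_mul_sum]
  refine sum_congr rfl fun j hj ↦ ?_
  have hjn := mem_range.mp hj
  rw [sum_eq_single_of_mem j hj, smul_mul_smul_comm, layer_mul_layer hP hjn hjn, if_pos rfl,
    mul_pow]
  intro k hk hkj
  rw [smul_mul_smul_comm, layer_mul_layer hP hjn (mem_range.mp hk), if_neg (Ne.symm hkj),
    smul_zero]

theorem scaleLayers_mul_top (w : R) : scaleLayers P n w * P n = scaleLayers P n w := by
  rw [scaleLayers, sum_mul]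
  refine sum_congr rfl fun j hj ↦ ?_
  have hjn := mem_range.mp hj
  rw [smul_mul_assoc, sub_mul, hP _ hjn _ le_rfl, hP _ hjn.le _ le_rfl, min_eq_left hjn,
    min_eq_left hjn.le]

end Layers

section Factors

variable {R A : Type*} [CommRing R] [Ring A] [Algebra R A] {P : ℕ → A}

theorem prod_factors_eq_scaleLayers_add (hP0 : P 0 = 0) (w : R) (n : ℕ)
    (hP : ∀ j ≤ n, ∀ k ≤ n, P j * P k = P (min j k)) :
    ((List.range n).map fun k ↦ P (k + 1) + w • (1 - P (k + 1))).prod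
      = scaleLayers P n w + w ^ n • (1 - P n) := by
  induction n with
  | zero => simp [scaleLayers, hP0]
  | succ n ih =>
    have hPn : ∀ j ≤ n, ∀ k ≤ n, P j * P k = P (min j k) :=
      fun j hj k hk ↦ hP j (by omega) k (by omega)
    have hnext : P n * P (n + 1) = P n := by rw [hP n (by omega) _ le_rfl, min_eq_left (by omega)]
    have hS : scaleLayers P n w * P (n + 1) = scaleLayers P n w := by
      rw [← scaleLayers_mul_top hPn, mul_assoc, hnext]
    rw [List.range_succ, List.map_append, List.prod_append, ih hPn, scaleLayers_succ]
    simp only [List.map_cons, List.map_nil, List.prod_cons, List.prod_nil, add_mul, mul_add,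
      sub_mul, mul_sub, one_mul, mul_one, smul_mul_assoc, mul_smul_comm, smul_sub, hS,
      hnext]
    module

end Factors

theorem isUnit_scaleLayers_and_inverse {R A : Type*} [Field R] [Ring A] [Algebra R A] {P : ℕ → A} {n : ℕ}
    (hP0 : P 0 = 0) (hPn : P n = 1) (hP : ∀ j ≤ n, ∀ k ≤ n, P j * P k = P (min j k))
    {w : R} (hw : w ≠ 0) :
    IsUnit (scaleLayers P n w) ∧ Ring.inverse (scaleLayers P n w) = scaleLayers P n w⁻¹ := by
  have hinv : ∀ v : R, v ≠ 0 → scaleLayers P n v * scaleLayers P n v⁻¹ = 1 := fun v hv ↦ by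
    rw [scaleLayers_mul_scaleLayers hP, mul_inv_cancel₀ hv, scaleLayers_one, hPn, hP0, sub_zero]
  let u : Aˣ := ⟨scaleLayers P n w, scaleLayers P n w⁻¹, hinv w hw,
    by simpa using hinv w⁻¹ (inv_ne_zero hw)⟩
  exact ⟨u.isUnit, Ring.inverse_unit u⟩

theorem stmt15_general {B : Type*} [NormedAddCommGroup B] [NormedSpace ℂ B]
    (m : ℕ) (P : ℕ → (B →L[ℂ] B))
    (hP0 : P 0 = 0) (hPtop : P (m + 1) = 1)
    (hproj : ∀ k ≤ m + 1, P k * P k = P k)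
    (hrange : ∀ j ≤ m, LinearMap.range (P j : B →ₗ[ℂ] B) ≤ LinearMap.range (P (j + 1) : B →ₗ[ℂ] B))
    (hker : ∀ j ≤ m, LinearMap.ker (P (j + 1) : B →ₗ[ℂ] B) ≤ LinearMap.ker (P j : B →ₗ[ℂ] B))
    (w : ℂ) :
    ((List.range m).map
        (fun k => P (k + 1) + w • ((1 : B →L[ℂ] B) - P (k + 1)))).prod
      = ∑ j ∈ Finset.range (m + 1), w ^ j • (P (j + 1) - P j) ∧
    (w ≠ 0 →
      IsUnit (((List.range m).map
          (fun k => P (k + 1) + w • ((1 : B →L[ℂ] B) - P (k + 1)))).prod) ∧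
      Ring.inverse (((List.range m).map
          (fun k => P (k + 1) + w • ((1 : B →L[ℂ] B) - P (k + 1)))).prod)
        = ∑ j ∈ Finset.range (m + 1), w⁻¹ ^ j • (P (j + 1) - P j)) := by
  have hchain : ∀ j ≤ m + 1, ∀ k ≤ m + 1, P j * P k = P (min j k) :=
    mul_eq_min_of_adjacent hproj
      (fun k hk ↦ ContinuousLinearMap.mul_eq_right_of_range_le (hproj _ hk) (hrange k (by omega)))
      (fun k hk ↦ ContinuousLinearMap.mul_eq_left_of_ker_le (hproj _ hk) (hker k (by omega)))
  have hprod : ((List.range m).map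
      (fun k => P (k + 1) + w • ((1 : B →L[ℂ] B) - P (k + 1)))).prod = scaleLayers P (m + 1) w := by
    rw [prod_factors_eq_scaleLayers_add hP0 w m fun j hj k hk ↦ hchain j (by omega) k (by omega),
      scaleLayers_succ, hPtop]
  rw [hprod]
  exact ⟨rfl, isUnit_scaleLayers_and_inverse hP0 hPtop hchain⟩

/-- Let `P₀ = 0, P₁, …, P_m, P_{m+1} = I` be continuous linear projections on a
complex Banach space `B` with `ran P_j ⊆ ran P_{j+1}` and `ker P_{j+1} ⊆ ker P_j` for
`0 ≤ j ≤ m`, and `Q_k = I − P_k`. Then for every `w ∈ ℂ`,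
`(P₁ + wQ₁)(P₂ + wQ₂) ⋯ (P_m + wQ_m) = ∑_{j=0}^{m} (P_{j+1} − P_j) w^j`; moreover, if
`w ≠ 0`, this operator is invertible in `L(B)` with inverse
`∑_{j=0}^{m} (P_{j+1} − P_j) w^{−j}`. -/
theorem stmt15 {B : Type*} [NormedAddCommGroup B] [NormedSpace ℂ B] [CompleteSpace B]
    (m : ℕ) (P : ℕ → (B →L[ℂ] B))
    (hP0 : P 0 = 0) (hPtop : P (m + 1) = 1)
    (hproj : ∀ k ≤ m + 1, P k * P k = P k)
    (hrange : ∀ j ≤ m, LinearMap.range (P j : B →ₗ[ℂ] B) ≤ LinearMap.range (P (j + 1) : B →ₗ[ℂ] B))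
    (hker : ∀ j ≤ m, LinearMap.ker (P (j + 1) : B →ₗ[ℂ] B) ≤ LinearMap.ker (P j : B →ₗ[ℂ] B))
    (w : ℂ) :
    ((List.range m).map
        (fun k => P (k + 1) + w • ((1 : B →L[ℂ] B) - P (k + 1)))).prod
      = ∑ j ∈ Finset.range (m + 1), w ^ j • (P (j + 1) - P j) ∧
    (w ≠ 0 →
      IsUnit (((List.range m).map
          (fun k => P (k + 1) + w • ((1 : B →L[ℂ] B) - P (k + 1)))).prod) ∧
      Ring.inverse (((List.range m).map
          (fun k => P (k + 1) + w • ((1 : B →L[ℂ] B) - P (k + 1)))).prod)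
        = ∑ j ∈ Finset.range (m + 1), w⁻¹ ^ j • (P (j + 1) - P j)) :=
  stmt15_general m P hP0 hPtop hproj hrange hker w
end
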